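/- arXiv:1404.6744 — 7 statements merged into one kernel-verified Lean document; each statement's English description precedes it below -/
import Mathlib

section
/- Let n be a positive integer and let a₁,…,aₙ and b₁,…,bₙ be positive real numbers. Define T = Σ_{k=1}^n aₖ/bₖ and, for m = 1, 2, 3, S^(m) = Σ_{k=1}^n Σ_{l=1}^n aₖaₗ/(bₖ+bₗ)^m. Then T² ≤ 2·S^(2) + 2√2·√(S^(1)·S^(3)). -/
open Real Finset MeasureTheory Set Filter Topology
open scoped Nat

/-!
Since `a / b = ∫₀^∞ a e^{-bt} dt`, the sum `T` is the integral of `F(t) = ∑ₖ aₖ e^{-bₖ t}` over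
`(0, ∞)`, and `F(t)² = ∑ₖ ∑ₗ aₖ aₗ e^{-(bₖ + bₗ) t}`. For `λ > 0` the weight `λ / (λ + t)²` has
integral `1`, so the Cauchy–Schwarz inequality gives `T² ≤ ∫₀^∞ (λ + t)² / λ · F(t)² dt`, which
equals `λ S⁽¹⁾ + 2 S⁽²⁾ + (2 / λ) S⁽³⁾` because `∫₀^∞ tᵐ e^{-st} dt = m! / s^{m+1}`.
The choice `λ = √(2 S⁽³⁾ / S⁽¹⁾)` minimises the right-hand side.
-/

lemma two_mul_mul_le_mul_sq_add_sq_mul_inv {p : ℝ} (hp : 0 < p) (c u : ℝ) :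
    2 * c * u ≤ p * u ^ 2 + c ^ 2 * p⁻¹ := by
  have h : p * u ^ 2 + c ^ 2 * p⁻¹ - 2 * c * u = (p * u - c) ^ 2 / p := by
    field_simp
    ring
  linarith [div_nonneg (sq_nonneg (p * u - c)) hp.le]

theorem sq_integral_le_integral_mul_sq {α : Type*} [MeasurableSpace α] {μ : Measure α}
    {F p : α → ℝ} (hp : ∀ᵐ x ∂μ, 0 < p x) (hpF : Integrable (fun x ↦ p x * F x ^ 2) μ)
    (hp_inv : ∫ x, (p x)⁻¹ ∂μ = 1) :
    (∫ x, F x ∂μ) ^ 2 ≤ ∫ x, p x * F x ^ 2 ∂μ := by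
  by_cases hF : Integrable F μ
  swap
  · rw [integral_undef hF, sq, zero_mul]
    exact integral_nonneg_of_ae (hp.mono fun x hx ↦ by positivity)
  set c := ∫ x, F x ∂μ
  have hinv : Integrable (fun x ↦ (p x)⁻¹) μ :=
    .of_integral_ne_zero (by rw [hp_inv]; exact one_ne_zero)
  have hmono : ∫ x, 2 * c * F x ∂μ ≤ ∫ x, p x * F x ^ 2 + c ^ 2 * (p x)⁻¹ ∂μ :=
    integral_mono_ae (hF.const_mul (2 * c)) (hpF.add (hinv.const_mul (c ^ 2)))
      (hp.mono fun x hx ↦ two_mul_mul_le_mul_sq_add_sq_mul_inv hx c (F x))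
  rw [integral_const_mul, integral_add hpF (hinv.const_mul _), integral_const_mul, hp_inv] at hmono
  nlinarith

theorem integral_pow_mul_exp_neg_mul_Ioi (k : ℕ) {c : ℝ} (hc : 0 < c) :
    ∫ x in Ioi 0, x ^ k * exp (-(c * x)) = k ! / c ^ (k + 1) := by
  have key := integral_rpow_mul_exp_neg_mul_Ioi (a := k + 1) (by positivity) hc
  have hpow : ((k : ℝ) + 1) = ((k + 1 : ℕ) : ℝ) := by norm_cast
  simp_rw [add_sub_cancel_right, rpow_natCast] at key
  rw [key, Gamma_nat_eq_factorial, hpow, rpow_natCast, one_div, inv_pow, div_eq_inv_mul]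

theorem integrableOn_pow_mul_exp_neg_mul_Ioi (k : ℕ) {c : ℝ} (hc : 0 < c) :
    IntegrableOn (fun x ↦ x ^ k * exp (-(c * x))) (Ioi 0) :=
  .of_integral_ne_zero (by rw [integral_pow_mul_exp_neg_mul_Ioi k hc]; positivity)

theorem integral_div_add_sq_Ioi {r : ℝ} (hr : 0 < r) : ∫ t in Ioi 0, r / (r + t) ^ 2 = 1 := by
  have hderiv : ∀ t ∈ Ici (0 : ℝ), HasDerivAt (fun t ↦ -r / (r + t)) (r / (r + t) ^ 2) t := by
    intro t ht
    have : r + t ≠ 0 := by have : 0 ≤ t := ht; positivity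
    refine ((hasDerivAt_const t (-r)).fun_div ((hasDerivAt_id' t).const_add r) this).congr_deriv ?_
    ring
  have hlim : Tendsto (fun t ↦ -r / (r + t)) atTop (𝓝 0) :=
    tendsto_const_nhds.div_atTop (tendsto_atTop_add_const_left _ r tendsto_id)
  rw [integral_Ioi_of_hasDerivAt_of_nonneg' hderiv (fun t _ ↦ by positivity) hlim]
  field_simp
  ring

theorem integral_sq_add_div_mul_exp_neg_mul_Ioi {r s : ℝ} (hr : 0 < r) (hs : 0 < s) :
    ∫ t in Ioi 0, (r + t) ^ 2 / r * exp (-(s * t)) = r / s + 2 / s ^ 2 + 2 / r / s ^ 3 := by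
  have hint (k : ℕ) := integrableOn_pow_mul_exp_neg_mul_Ioi k hs
  have expand (t : ℝ) : (r + t) ^ 2 / r * exp (-(s * t)) = r * (t ^ 0 * exp (-(s * t))) +
      2 * (t ^ 1 * exp (-(s * t))) + r⁻¹ * (t ^ 2 * exp (-(s * t))) := by
    field_simp
    ring
  simp_rw [expand]
  rw [integral_add, integral_add, integral_const_mul, integral_const_mul, integral_const_mul,
    integral_pow_mul_exp_neg_mul_Ioi 0 hs, integral_pow_mul_exp_neg_mul_Ioi 1 hs,
    integral_pow_mul_exp_neg_mul_Ioi 2 hs]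
  · norm_num [Nat.factorial]
    field_simp
  exacts [(hint 0).const_mul r, (hint 1).const_mul 2,
    ((hint 0).const_mul r).add ((hint 1).const_mul 2), (hint 2).const_mul _]

theorem integrableOn_sq_add_div_mul_exp_neg_mul_Ioi {r s : ℝ} (hr : 0 < r) (hs : 0 < s) :
    IntegrableOn (fun t ↦ (r + t) ^ 2 / r * exp (-(s * t))) (Ioi 0) :=
  .of_integral_ne_zero (by rw [integral_sq_add_div_mul_exp_neg_mul_Ioi hr hs]; positivity)

theorem exists_pos_mul_add_div_eq_two_sqrt_mul {x y : ℝ} (hx : 0 < x) (hy : 0 < y) :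
    ∃ r > 0, r * x + y / r = 2 * √(x * y) := by
  have hr : 0 < √(y / x) := by positivity
  have hsq : √(y / x) ^ 2 = y / x := sq_sqrt (by positivity)
  refine ⟨√(y / x), hr, ?_⟩
  rw [show x * y = y / x * x ^ 2 by field_simp, sqrt_mul (by positivity), sqrt_sq hx.le]
  field_simp
  field_simp at hsq
  linarith

noncomputable def hilbertSum {ι : Type*} [Fintype ι] (m : ℕ) (a b : ι → ℝ) : ℝ :=
  ∑ k, ∑ l, a k * a l / (b k + b l) ^ m

section

variable {ι : Type*} [Fintype ι]

theorem sq_sum_mul_exp_neg_mul (a b : ι → ℝ) (t : ℝ) :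
    (∑ k, a k * exp (-(b k * t))) ^ 2 = ∑ k, ∑ l, a k * a l * exp (-((b k + b l) * t)) := by
  rw [sq, sum_mul_sum]
  refine sum_congr rfl fun k _ ↦ sum_congr rfl fun l _ ↦ ?_
  rw [add_mul, neg_add, exp_add]
  ring

theorem sq_sum_div_le_hilbertSum (a : ι → ℝ) {b : ι → ℝ} (hb : ∀ i, 0 < b i) {r : ℝ}
    (hr : 0 < r) :
    (∑ k, a k / b k) ^ 2 ≤
      r * hilbertSum 1 a b + 2 * hilbertSum 2 a b + 2 / r * hilbertSum 3 a b := by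
  have hbb (k l : ι) : 0 < b k + b l := add_pos (hb k) (hb l)
  have hint (k l : ι) := integrableOn_sq_add_div_mul_exp_neg_mul_Ioi hr (hbb k l)
  set F : ℝ → ℝ := fun t ↦ ∑ k, a k * exp (-(b k * t))
  have hF : ∫ t in Ioi 0, F t = ∑ k, a k / b k := by
    rw [integral_finsetSum _ fun k _ ↦ by
      simpa using (integrableOn_pow_mul_exp_neg_mul_Ioi 0 (hb k)).const_mul (a k)]
    refine sum_congr rfl fun k _ ↦ ?_
    rw [integral_const_mul, div_eq_mul_inv]
    congr 1
    simpa using integral_pow_mul_exp_neg_mul_Ioi 0 (hb k)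
  have hpF (t : ℝ) : (r + t) ^ 2 / r * F t ^ 2 =
      ∑ k, ∑ l, a k * a l * ((r + t) ^ 2 / r * exp (-((b k + b l) * t))) := by
    simp only [F, sq_sum_mul_exp_neg_mul, mul_sum]
    refine sum_congr rfl fun k _ ↦ sum_congr rfl fun l _ ↦ ?_
    ring
  calc (∑ k, a k / b k) ^ 2
      = (∫ t in Ioi 0, F t) ^ 2 := by rw [hF]
    _ ≤ ∫ t in Ioi 0, (r + t) ^ 2 / r * F t ^ 2 := by
      refine sq_integral_le_integral_mul_sq
        (ae_restrict_of_forall_mem measurableSet_Ioi fun t (ht : 0 < t) ↦ by positivity) ?_ ?_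
      · simp_rw [hpF]
        exact integrable_finsetSum _ fun k _ ↦ integrable_finsetSum _ fun l _ ↦
          (hint k l).const_mul _
      · simp_rw [inv_div]
        exact integral_div_add_sq_Ioi hr
    _ = ∑ k, ∑ l, a k * a l *
          (r / (b k + b l) + 2 / (b k + b l) ^ 2 + 2 / r / (b k + b l) ^ 3) := by
      simp_rw [hpF]
      rw [integral_finsetSum _ fun k _ ↦ integrable_finsetSum _ fun l _ ↦ (hint k l).const_mul _]
      refine sum_congr rfl fun k _ ↦ ?_
      rw [integral_finsetSum _ fun l _ ↦ (hint k l).const_mul _]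
      refine sum_congr rfl fun l _ ↦ ?_
      rw [integral_const_mul, integral_sq_add_div_mul_exp_neg_mul_Ioi hr (hbb k l)]
    _ = r * hilbertSum 1 a b + 2 * hilbertSum 2 a b + 2 / r * hilbertSum 3 a b := by
      simp only [hilbertSum, mul_sum, ← sum_add_distrib]
      refine sum_congr rfl fun k _ ↦ sum_congr rfl fun l _ ↦ ?_
      ring

theorem hilbertSum_pos [Nonempty ι] {a b : ι → ℝ} (ha : ∀ i, 0 < a i) (hb : ∀ i, 0 < b i)
    (m : ℕ) : 0 < hilbertSum m a b := by
  refine sum_pos (fun k _ ↦ sum_pos (fun l _ ↦ ?_) univ_nonempty) univ_nonempty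
  have := add_pos (hb k) (hb l)
  exact div_pos (mul_pos (ha k) (ha l)) (by positivity)

theorem sq_sum_div_le_two_hilbertSum_add [Nonempty ι] {a b : ι → ℝ} (ha : ∀ i, 0 < a i)
    (hb : ∀ i, 0 < b i) :
    (∑ k, a k / b k) ^ 2 ≤
      2 * hilbertSum 2 a b + 2 * √2 * √(hilbertSum 1 a b * hilbertSum 3 a b) := by
  obtain ⟨r, hr, hr_opt⟩ := exists_pos_mul_add_div_eq_two_sqrt_mul (hilbertSum_pos ha hb 1)
    (mul_pos two_pos (hilbertSum_pos ha hb 3))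
  have hsqrt : √(hilbertSum 1 a b * (2 * hilbertSum 3 a b)) =
      √2 * √(hilbertSum 1 a b * hilbertSum 3 a b) := by
    rw [mul_left_comm, sqrt_mul zero_le_two]
  have := sq_sum_div_le_hilbertSum a hb hr
  rw [hsqrt, ← div_mul_eq_mul_div] at hr_opt
  linarith

end

theorem hilbert_like_reverse_inequality
    (n : ℕ) (hn : 0 < n) (a b : Fin n → ℝ)
    (ha : ∀ i, 0 < a i) (hb : ∀ i, 0 < b i) :
    (∑ k, a k / b k) ^ 2 ≤
      2 * (∑ k, ∑ l, a k * a l / (b k + b l) ^ 2) +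
      2 * Real.sqrt 2 *
        Real.sqrt ((∑ k, ∑ l, a k * a l / (b k + b l) ^ 1) *
          (∑ k, ∑ l, a k * a l / (b k + b l) ^ 3)) := by
  have : Nonempty (Fin n) := ⟨⟨0, hn⟩⟩
  exact sq_sum_div_le_two_hilbertSum_add ha hb
end

section
/- Let λ > 0 be a real number. The inequality πx(1+x²)/sinh(πx) ≤ 1/cosh²(λx) holds for every nonzero real number x if and only if λ ≤ λ₀, where λ₀ = √(π²/6 − 1). -/
open Real Finset

private lemma pi_sq_gt_six : (6:ℝ) < π ^ 2 := by nlinarith [Real.pi_gt_three]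

private lemma pi_sq_lt : π ^ 2 < 9.9226 := by nlinarith [Real.pi_lt_d2, Real.pi_pos]

private lemma step_alg (a F2 F5 P c2 p2 N : ℝ) (ha0 : 0 ≤ a) (hF2 : 0 < F2) (hF5 : 0 < F5)
    (hN0 : 0 ≤ N) (hc20 : 0 ≤ c2) (hP0 : 0 < P)
    (key : c2 * ((2*N+7)*(2*N+6)) ≤ p2 * ((2*N+4)*(2*N+3)))
    (ih : (c2*a) / ((2*N+4)*((2*N+3)*F2)) + a / F2 ≤ 2 * P / F5) :
    (c2*(c2*a)) / ((2*N+6)*((2*N+5)*((2*N+4)*((2*N+3)*F2))))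
      + (c2*a) / ((2*N+4)*((2*N+3)*F2))
      ≤ 2 * (p2 * P) / ((2*N+7)*((2*N+6)*F5)) := by
  have h3 : (0:ℝ) < 2*N+3 := by linarith
  have h4 : (0:ℝ) < 2*N+4 := by linarith
  have h5 : (0:ℝ) < 2*N+5 := by linarith
  have h6 : (0:ℝ) < 2*N+6 := by linarith
  have h7 : (0:ℝ) < 2*N+7 := by linarith
  calc (c2*(c2*a)) / ((2*N+6)*((2*N+5)*((2*N+4)*((2*N+3)*F2))))
        + (c2*a) / ((2*N+4)*((2*N+3)*F2))
      = (c2 / ((2*N+6)*(2*N+5))) * ((c2*a) / ((2*N+4)*((2*N+3)*F2)))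
        + (c2 / ((2*N+4)*(2*N+3))) * (a / F2) := by
        field_simp
    _ ≤ (c2 / ((2*N+4)*(2*N+3))) * ((c2*a) / ((2*N+4)*((2*N+3)*F2)))
        + (c2 / ((2*N+4)*(2*N+3))) * (a / F2) := by
        have hA : c2 / ((2*N+6)*(2*N+5)) ≤ c2 / ((2*N+4)*(2*N+3)) := by
          apply div_le_div_of_nonneg_left hc20 (by positivity) (by nlinarith)
        have hB0 : 0 ≤ (c2*a) / ((2*N+4)*((2*N+3)*F2)) := by positivity
        have := mul_le_mul_of_nonneg_right hA hB0
        linarith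
    _ = (c2 / ((2*N+4)*(2*N+3)))
        * ((c2*a) / ((2*N+4)*((2*N+3)*F2)) + a / F2) := by ring
    _ ≤ (c2 / ((2*N+4)*(2*N+3))) * (2 * P / F5) := by
        apply mul_le_mul_of_nonneg_left ih (by positivity)
    _ ≤ 2 * (p2 * P) / ((2*N+7)*((2*N+6)*F5)) := by
        rw [div_mul_div_comm, div_le_div_iff₀ (by positivity) (by positivity)]
        have h := mul_le_mul_of_nonneg_right key
          (show (0:ℝ) ≤ 2 * (P * F5) by positivity)
        nlinarith [h]

private lemma coeff_key {c : ℝ} (hc : c ^ 2 = 2 * π ^ 2 / 3 - 4) (n : ℕ) :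
    c ^ (2 * (n + 2)) / (Nat.factorial (2 * (n + 2)) : ℝ)
      + c ^ (2 * (n + 1)) / (Nat.factorial (2 * (n + 1)) : ℝ)
      ≤ 2 * π ^ (2 * (n + 2)) / (Nat.factorial (2 * (n + 2) + 1) : ℝ) := by
  induction n with
  | zero =>
      have h4 : c ^ 4 = (2 * π ^ 2 / 3 - 4) ^ 2 := by
        rw [show c ^ 4 = (c ^ 2) ^ 2 by ring, hc]
      norm_num [Nat.factorial]
      nlinarith [pi_sq_lt, pi_sq_gt_six, sq_nonneg (π ^ 2)]
  | succ m ih =>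
      have hc2 : 7 * c ^ 2 ≤ 2 * π ^ 2 := by nlinarith [pi_sq_lt]
      have hN0 : (0:ℝ) ≤ (m:ℝ) := Nat.cast_nonneg m
      have key : c ^ 2 * ((2*(m:ℝ)+7)*(2*(m:ℝ)+6)) ≤ π ^ 2 * ((2*(m:ℝ)+4)*(2*(m:ℝ)+3)) := by
        nlinarith [hc2, hN0, sq_nonneg c, mul_nonneg hN0 hN0]
      have ha0 : 0 ≤ c ^ (2 * (m + 1)) := by
        rw [show 2 * (m+1) = (m+1) * 2 by ring, pow_mul]; positivity
      have hF4 : ((Nat.factorial (2 * (m + 2)) : ℕ) : ℝ)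
          = (2*(m:ℝ)+4) * ((2*(m:ℝ)+3) * ((Nat.factorial (2 * (m + 1)) : ℕ) : ℝ)) := by
        rw [show 2 * (m + 2) = (2 * (m+1) + 1) + 1 by ring, Nat.factorial_succ,
          Nat.factorial_succ]
        push_cast; ring
      have hF6 : ((Nat.factorial (2 * (m + 1 + 2)) : ℕ) : ℝ)
          = (2*(m:ℝ)+6) * ((2*(m:ℝ)+5) * ((Nat.factorial (2 * (m + 2)) : ℕ) : ℝ)) := by
        rw [show 2 * (m + 1 + 2) = (2 * (m+2) + 1) + 1 by ring, Nat.factorial_succ,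
          Nat.factorial_succ]
        push_cast; ring
      have hF7 : ((Nat.factorial (2 * (m + 1 + 2) + 1) : ℕ) : ℝ)
          = (2*(m:ℝ)+7) * ((2*(m:ℝ)+6) * ((Nat.factorial (2 * (m + 2) + 1) : ℕ) : ℝ)) := by
        rw [show 2 * (m + 1 + 2) + 1 = (2 * (m+2) + 1 + 1) + 1 by ring, Nat.factorial_succ,
          Nat.factorial_succ]
        push_cast; ring
      have hb : c ^ (2 * (m + 1 + 2)) = c ^ 2 * (c ^ 2 * c ^ (2 * (m + 1))) := by
        rw [← pow_add, ← pow_add]; ring_nf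
      have hb2 : c ^ (2 * (m + 1 + 1)) = c ^ 2 * c ^ (2 * (m + 1)) := by
        rw [← pow_add]; ring_nf
      have hp6 : π ^ (2 * (m + 1 + 2)) = π ^ 2 * π ^ (2 * (m + 2)) := by
        rw [← pow_add]; ring_nf
      rw [hb, hb2, hp6, hF6, hF7, hF4]
      rw [hb2, hF4] at ih
      exact step_alg _ _ _ _ _ _ _ ha0 (by positivity) (by positivity) hN0
        (sq_nonneg c) (by positivity) key ih

private lemma main_ineq {c : ℝ} (hc : c ^ 2 = 2 * π ^ 2 / 3 - 4) {x : ℝ} (hx : 0 ≤ x) :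
    π * x * (1 + x ^ 2) * (1 + Real.cosh (c * x)) ≤ 2 * Real.sinh (π * x) := by
  have hF : HasSum (fun k => 2 * ((π*x) ^ (2*k+1) / (Nat.factorial (2*k+1) : ℝ)))
      (2 * Real.sinh (π*x)) := (Real.hasSum_sinh (π*x)).mul_left 2
  have hG3 : HasSum (fun k => π*x * ((c*x) ^ (2*k) / (Nat.factorial (2*k) : ℝ)))
      (π*x * Real.cosh (c*x)) := (Real.hasSum_cosh (c*x)).mul_left (π*x)
  set g : ℕ → ℝ := fun k => Nat.casesOn k 0
      (fun m => π*x^3 * ((c*x) ^ (2*m) / (Nat.factorial (2*m) : ℝ))) with hgdef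
  have hg1 : HasSum (fun m => g (m+1)) (π*x^3 * Real.cosh (c*x)) :=
    (Real.hasSum_cosh (c*x)).mul_left (π*x^3)
  have hg : HasSum g (π*x^3 * Real.cosh (c*x)) := by
    refine (hasSum_nat_add_iff' 1).1 ?_
    simpa [show g 0 = 0 from rfl] using hg1
  have hG1 : HasSum (fun k : ℕ => if k = 0 then π*x else 0) (π*x) := hasSum_ite_eq 0 _
  have hG2 : HasSum (fun k : ℕ => if k = 1 then π*x^3 else 0) (π*x^3) := hasSum_ite_eq 1 _
  have hGall := ((hG1.add hG2).add hG3).add hg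
  have hterm : ∀ k : ℕ,
      ((((if k = 0 then π*x else 0) + (if k = 1 then π*x^3 else 0))
        + π*x * ((c*x) ^ (2*k) / (Nat.factorial (2*k) : ℝ))) + g k)
      ≤ 2 * ((π*x) ^ (2*k+1) / (Nat.factorial (2*k+1) : ℝ)) := by
    intro k
    match k with
    | 0 =>
        norm_num [hgdef, Nat.factorial]
        linarith [Real.pi_pos]
    | 1 =>
        apply le_of_eq
        norm_num [hgdef, Nat.factorial]
        linear_combination (π * x ^ 3 / 2) * hc
    | (m+2) =>
        have key := coeff_key hc m
        have hxp : (0:ℝ) ≤ π * x ^ (2*(m+2)+1) := by positivity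
        have h := mul_le_mul_of_nonneg_left key hxp
        have hgval : g (m+2) = π*x^3 * ((c*x) ^ (2*(m+1)) / (Nat.factorial (2*(m+1)) : ℝ)) := rfl
        rw [if_neg (by omega : ¬(m+2=0)), if_neg (by omega : ¬(m+2=1)), hgval,
          zero_add, zero_add]
        calc π*x * ((c*x) ^ (2*(m+2)) / (Nat.factorial (2*(m+2)) : ℝ))
              + π*x^3 * ((c*x) ^ (2*(m+1)) / (Nat.factorial (2*(m+1)) : ℝ))
            = π * x ^ (2*(m+2)+1) * (c ^ (2*(m+2)) / (Nat.factorial (2*(m+2)) : ℝ)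
                + c ^ (2*(m+1)) / (Nat.factorial (2*(m+1)) : ℝ)) := by
              rw [mul_pow, mul_pow]; ring
          _ ≤ π * x ^ (2*(m+2)+1)
                * (2 * π ^ (2*(m+2)) / (Nat.factorial (2*(m+2)+1) : ℝ)) := h
          _ = 2 * ((π*x) ^ (2*(m+2)+1) / (Nat.factorial (2*(m+2)+1) : ℝ)) := by
              rw [mul_pow]; ring
  have hle := hasSum_le hterm hGall hF
  nlinarith [hle, Real.cosh_pos (c*x)]

private lemma cosh_lb (t : ℝ) : 1 + t^2/2 ≤ Real.cosh t := by
  have h := sum_le_hasSum (Finset.range 2)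
    (fun i _ => by
      have : (0:ℝ) ≤ t ^ (2*i) := by rw [show 2*i = i*2 by ring, pow_mul]; positivity
      positivity)
    (Real.hasSum_cosh t)
  simpa [Finset.sum_range_succ, Nat.factorial] using h

private lemma sinh_ub {t : ℝ} (h0 : 0 ≤ t) (h1 : t ≤ 1) : Real.sinh t ≤ t + t^3/6 + t^5 := by
  have habs : |t| ≤ 1 := by rwa [abs_of_nonneg h0]
  have habs' : |(-t)| ≤ 1 := by rwa [abs_neg]
  have h6 : (0:ℕ) < 6 := by norm_num
  have hb1 := Real.exp_bound habs h6
  have hb2 := Real.exp_bound habs' h6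
  rw [abs_of_nonneg h0] at hb1
  rw [abs_neg, abs_of_nonneg h0] at hb2
  have e1 : ∑ m ∈ Finset.range 6, t ^ m / (Nat.factorial m : ℝ)
      = 1 + t + t^2/2 + t^3/6 + t^4/24 + t^5/120 := by
    simp [Finset.sum_range_succ, Nat.factorial]
  have e2 : ∑ m ∈ Finset.range 6, (-t) ^ m / (Nat.factorial m : ℝ)
      = 1 - t + t^2/2 - t^3/6 + t^4/24 - t^5/120 := by
    simp [Finset.sum_range_succ, Nat.factorial]
    ring
  rw [e1] at hb1
  rw [e2] at hb2
  have hb1' := (abs_le.1 hb1).2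
  have hb2' := (abs_le.1 hb2).1
  rw [Real.sinh_eq]
  have ht6 : t^6 ≤ t^5 := by
    calc t^6 = t^5 * t := by ring
      _ ≤ t^5 * 1 := by
          apply mul_le_mul_of_nonneg_left h1 (by positivity)
      _ = t^5 := by ring
  norm_num [Nat.factorial] at hb1' hb2'
  nlinarith [hb1', hb2', ht6, pow_nonneg h0 5, pow_nonneg h0 6]

theorem sinh_cosh_inequality_iff
    (lam : ℝ) (hlam : 0 < lam) :
    (∀ x : ℝ, x ≠ 0 →
        π * x * (1 + x ^ 2) / Real.sinh (π * x) ≤ 1 / Real.cosh (lam * x) ^ 2) ↔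
      lam ≤ Real.sqrt (π ^ 2 / 6 - 1) := by
  have hπ := Real.pi_pos
  constructor
  · intro h
    rw [Real.le_sqrt hlam.le (by nlinarith [pi_sq_gt_six] : (0:ℝ) ≤ π^2/6-1)]
    by_contra hgt
    push_neg at hgt
    have hδpos : 0 < lam^2 - (π^2/6 - 1) := by linarith
    set δ := lam^2 - (π^2/6 - 1) with hδ
    clear_value δ
    set x := min (1/π) (Real.sqrt δ / π^2) / 2 with hxdef
    have hxpos : 0 < x := by
      apply div_pos (lt_min (by positivity) (by positivity)) two_pos
    have hx1 : π * x ≤ 1 := by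
      have h1 : x ≤ (1/π)/2 := by
        rw [hxdef]
        have := min_le_left (1/π) (Real.sqrt δ / π^2)
        linarith
      have h2 : π * x ≤ π * ((1/π)/2) := by
        apply mul_le_mul_of_nonneg_left h1 hπ.le
      have h3 : π * ((1/π)/2) = 1/2 := by field_simp
      linarith
    have hx2 : π^4 * x^2 < δ := by
      have h1 : x ≤ (Real.sqrt δ / π^2)/2 := by
        rw [hxdef]
        have := min_le_right (1/π) (Real.sqrt δ / π^2)
        linarith
      have h2 : x^2 ≤ ((Real.sqrt δ / π^2)/2)^2 :=
        pow_le_pow_left₀ hxpos.le h1 2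
      have h3 : ((Real.sqrt δ / π^2)/2)^2 = δ / (4 * π^4) := by
        rw [div_pow, div_pow, Real.sq_sqrt hδpos.le]
        ring_nf
      have h4 : π^4 * x^2 ≤ δ/4 := by
        rw [h3] at h2
        have := mul_le_mul_of_nonneg_left h2 (show (0:ℝ) ≤ π^4 by positivity)
        have he : π^4 * (δ / (4*π^4)) = δ/4 := by field_simp
        linarith [he ▸ this]
      linarith
    have hx0 := h x (ne_of_gt hxpos)
    have hs : 0 < Real.sinh (π*x) := Real.sinh_pos_iff.2 (by positivity)
    rw [div_le_div_iff₀ hs (by positivity)] at hx0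
    have hcosh2 : 1 + lam^2*x^2 ≤ Real.cosh (lam*x)^2 := by
      nlinarith [cosh_lb (lam*x), Real.cosh_pos (lam*x), sq_nonneg (lam*x)]
    have hsub : Real.sinh (π*x) ≤ π*x + (π*x)^3/6 + (π*x)^5 :=
      sinh_ub (by positivity) hx1
    have hA : π*x*(1+x^2) * (1 + lam^2*x^2) ≤ π*x + (π*x)^3/6 + (π*x)^5 := by
      calc π*x*(1+x^2) * (1 + lam^2*x^2)
          ≤ π*x*(1+x^2) * Real.cosh (lam*x)^2 := by
            apply mul_le_mul_of_nonneg_left hcosh2 (by positivity)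
        _ ≤ 1 * Real.sinh (π*x) := hx0
        _ ≤ π*x + (π*x)^3/6 + (π*x)^5 := by linarith
    have hhint := mul_lt_mul_of_pos_left hx2 (show (0:ℝ) < π*x^3 by positivity)
    have hlamx : (0:ℝ) ≤ π * (lam^2 * x^5) := by positivity
    rw [hδ] at hhint
    nlinarith [hA, hhint, hlamx]
  · intro hle x hx
    have key : ∀ y : ℝ, 0 < y →
        π * y * (1 + y ^ 2) / Real.sinh (π * y) ≤ 1 / Real.cosh (lam * y) ^ 2 := by
      intro y hy
      have hcsq : (2*Real.sqrt (π^2/6-1))^2 = 2*π^2/3 - 4 := by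
        rw [mul_pow, Real.sq_sqrt (by nlinarith [pi_sq_gt_six] : (0:ℝ) ≤ π^2/6-1)]
        ring
      have hmain := main_ineq hcsq hy.le
      have hs : 0 < Real.sinh (π*y) := Real.sinh_pos_iff.2 (by positivity)
      rw [div_le_div_iff₀ hs (by positivity : (0:ℝ) < Real.cosh (lam*y)^2)]
      have hmono : Real.cosh (lam*y) ≤ Real.cosh (Real.sqrt (π^2/6-1) * y) := by
        rw [Real.cosh_le_cosh, abs_mul, abs_mul]
        apply mul_le_mul_of_nonneg_right _ (abs_nonneg y)
        rw [abs_of_pos hlam, abs_of_nonneg (Real.sqrt_nonneg _)]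
        exact hle
      have hsq : Real.cosh (lam*y)^2 ≤ Real.cosh (Real.sqrt (π^2/6-1)*y)^2 :=
        pow_le_pow_left₀ (Real.cosh_pos _).le hmono 2
      have hid : Real.cosh (Real.sqrt (π^2/6-1)*y)^2
          = (1 + Real.cosh (2*Real.sqrt (π^2/6-1)*y))/2 := by
        have h2 := Real.cosh_two_mul (Real.sqrt (π^2/6-1)*y)
        have h3 := Real.cosh_sq (Real.sqrt (π^2/6-1)*y)
        rw [show 2*Real.sqrt (π^2/6-1)*y = 2*(Real.sqrt (π^2/6-1)*y) by ring, h2]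
        linarith
      calc π*y*(1+y^2) * Real.cosh (lam*y)^2
          ≤ π*y*(1+y^2) * ((1 + Real.cosh (2*Real.sqrt (π^2/6-1)*y))/2) := by
            apply mul_le_mul_of_nonneg_left (hsq.trans_eq hid) (by positivity)
        _ ≤ 1 * Real.sinh (π*y) := by nlinarith [hmain]
    rcases hx.lt_or_gt with hneg | hpos
    · have h := key (-x) (by linarith)
      rw [show π * -x * (1 + (-x)^2) / Real.sinh (π * -x)
            = π * x * (1 + x^2) / Real.sinh (π * x) by
          rw [mul_neg, Real.sinh_neg, neg_sq, neg_mul, neg_div_neg_eq]] at h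
      rw [show Real.cosh (lam * -x) = Real.cosh (lam * x) by
          rw [mul_neg, Real.cosh_neg]] at h
      exact h
    · exact key x hpos
end

section
/- For every integer n ≥ 2, the quantity aₙ = (2n+1)·(2λ₀/π)^{2n−2}·(1/3 + (2n² − n − 2)/π²) satisfies aₙ < 1, where λ₀ = √(π²/6 − 1). -/
open Real

lemma pisq_lb : (9.8696:ℝ) < π ^ 2 := by nlinarith [Real.pi_gt_d6]

lemma pisq_ub : π ^ 2 < (9.8697:ℝ) := by nlinarith [Real.pi_lt_d6, Real.pi_pos]

lemma rsq_eq : (2 * Real.sqrt (π ^ 2 / 6 - 1) / π) ^ 2 = 2 / 3 - 4 / π ^ 2 := by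
  have h : (0:ℝ) ≤ π ^ 2 / 6 - 1 := by nlinarith [pisq_lb]
  have hπ : π ≠ 0 := Real.pi_ne_zero
  rw [div_pow, mul_pow, sq_sqrt h]
  field_simp
  ring

lemma step_ineq (m : ℝ) (hm : 2 ≤ m) :
    (2 / 3 - 4 / π ^ 2) * ((2 * (m + 1) + 1) * (1 / 3 + (2 * (m + 1) ^ 2 - (m + 1) - 2) / π ^ 2))
      ≤ (2 * m + 1) * (1 / 3 + (2 * m ^ 2 - m - 2) / π ^ 2) := by
  have h1 := pisq_lb
  have h2 := pisq_ub
  have hP : (0:ℝ) < π ^ 2 := by linarith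
  have key : (2 * π ^ 2 - 12) * ((2 * m + 3) * (π ^ 2 + 6 * m ^ 2 + 9 * m - 3))
      ≤ 3 * π ^ 2 * ((2 * m + 1) * (π ^ 2 + 6 * m ^ 2 - 3 * m - 6)) := by
    nlinarith [sq_nonneg (m - 2), sq_nonneg m, mul_pos hP hP, sq_nonneg (m - 2) , mul_nonneg (sub_nonneg.2 hm) (sub_nonneg.2 hm), mul_nonneg (mul_nonneg (sub_nonneg.2 hm) (sub_nonneg.2 hm)) (sub_nonneg.2 hm)]
  rw [← sub_nonneg]
  have e : (2 * m + 1) * (1 / 3 + (2 * m ^ 2 - m - 2) / π ^ 2)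
      - (2 / 3 - 4 / π ^ 2) * ((2 * (m + 1) + 1) * (1 / 3 + (2 * (m + 1) ^ 2 - (m + 1) - 2) / π ^ 2))
      = (3 * π ^ 2 * ((2 * m + 1) * (π ^ 2 + 6 * m ^ 2 - 3 * m - 6))
        - (2 * π ^ 2 - 12) * ((2 * m + 3) * (π ^ 2 + 6 * m ^ 2 + 9 * m - 3))) / (9 * π ^ 2 * π ^ 2) := by
    field_simp
    ring
  rw [e]
  apply div_nonneg (by linarith)
  positivity

theorem coefficient_a_n_lt_one (n : ℕ) (hn : 2 ≤ n) :
    (2 * (n : ℝ) + 1) * (2 * Real.sqrt (π ^ 2 / 6 - 1) / π) ^ (2 * n - 2) *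
      (1 / 3 + (2 * (n : ℝ) ^ 2 - (n : ℝ) - 2) / π ^ 2) < 1 := by
  induction n, hn using Nat.le_induction with
  | base =>
    have h1 := pisq_lb
    have h2 := pisq_ub
    have hP : (0:ℝ) < π ^ 2 := by linarith
    have hu1 : (0.405:ℝ) < 4 / π ^ 2 := by
      rw [lt_div_iff₀ hP]; nlinarith
    have hu2 : 4 / π ^ 2 < (0.4054:ℝ) := by
      rw [div_lt_iff₀ hP]; nlinarith
    have e2 : 2 * 2 - 2 = 2 := by norm_num
    rw [e2, rsq_eq]
    push_cast
    nlinarith [sq_nonneg (4 / π ^ 2)]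
  | succ n hn ih =>
    have hq0 : (0:ℝ) ≤ 2 * Real.sqrt (π ^ 2 / 6 - 1) / π := by positivity
    have hqpow : (0:ℝ) ≤ (2 * Real.sqrt (π ^ 2 / 6 - 1) / π) ^ (2 * n - 2) :=
      pow_nonneg hq0 _
    have hm : (2:ℝ) ≤ (n:ℝ) := by exact_mod_cast hn
    have hexp : 2 * (n + 1) - 2 = (2 * n - 2) + 2 := by omega
    have hpow : (2 * Real.sqrt (π ^ 2 / 6 - 1) / π) ^ (2 * (n + 1) - 2)
        = (2 * Real.sqrt (π ^ 2 / 6 - 1) / π) ^ (2 * n - 2) * (2 / 3 - 4 / π ^ 2) := by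
      rw [hexp, pow_add, rsq_eq]
    calc (2 * ((n:ℕ) + 1 : ℕ) + 1 : ℝ) * (2 * Real.sqrt (π ^ 2 / 6 - 1) / π) ^ (2 * (n + 1) - 2) *
          (1 / 3 + (2 * ((n:ℕ) + 1 : ℕ) ^ 2 - ((n:ℕ) + 1 : ℕ) - 2) / π ^ 2)
        = (2 * Real.sqrt (π ^ 2 / 6 - 1) / π) ^ (2 * n - 2) *
          ((2 / 3 - 4 / π ^ 2) * ((2 * ((n:ℝ) + 1) + 1) * (1 / 3 + (2 * ((n:ℝ) + 1) ^ 2 - ((n:ℝ) + 1) - 2) / π ^ 2))) := by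
          rw [hpow]; push_cast; ring
      _ ≤ (2 * Real.sqrt (π ^ 2 / 6 - 1) / π) ^ (2 * n - 2) *
          ((2 * (n:ℝ) + 1) * (1 / 3 + (2 * (n:ℝ) ^ 2 - (n:ℝ) - 2) / π ^ 2)) :=
          mul_le_mul_of_nonneg_left (step_ineq (n:ℝ) hm) hqpow
      _ = (2 * (n:ℝ) + 1) * (2 * Real.sqrt (π ^ 2 / 6 - 1) / π) ^ (2 * n - 2) *
          (1 / 3 + (2 * (n:ℝ) ^ 2 - (n:ℝ) - 2) / π ^ 2) := by ring
      _ < 1 := ih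
end

section
/- For every real number x, sinh(πx)/(πx) − (1+x²)cosh²(λ₀x) = Σ_{n=2}^∞ (1 − aₙ)·(πx)^{2n}/(2n+1)!, where aₙ = (2n+1)(2λ₀/π)^{2n−2}(1/3 + (2n² − n − 2)/π²) and λ₀ = √(π²/6 − 1); here at x = 0 the left-hand side is interpreted by continuity, i.e., sinh(πx)/(πx) is replaced by its limit 1. Equivalently, for every x ≠ 0, sinh(πx)/(πx) − (1+x²)cosh²(λ₀x) equals the sum of the series Σ_{n=2}^∞ (1 − aₙ)(πx)^{2n}/(2n+1)!. -/
open Real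

theorem power_series_expansion_f
    (x : ℝ) (hx : x ≠ 0) :
    HasSum
      (fun n : ℕ =>
        (1 - (2 * ((n : ℝ) + 2) + 1) *
            (2 * Real.sqrt (π ^ 2 / 6 - 1) / π) ^ (2 * (n + 2) - 2) *
            (1 / 3 + (2 * ((n : ℝ) + 2) ^ 2 - ((n : ℝ) + 2) - 2) / π ^ 2)) *
          (π * x) ^ (2 * (n + 2)) / (Nat.factorial (2 * (n + 2) + 1) : ℝ))
      (Real.sinh (π * x) / (π * x) -
        (1 + x ^ 2) * Real.cosh (Real.sqrt (π ^ 2 / 6 - 1) * x) ^ 2) := by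
  set L := Real.sqrt (π ^ 2 / 6 - 1) with hL
  have hπ : (0:ℝ) < π := Real.pi_pos
  have hπ6 : (6:ℝ) < π ^ 2 := by nlinarith [Real.pi_gt_three]
  have hL2 : L ^ 2 = π ^ 2 / 6 - 1 := Real.sq_sqrt (by nlinarith)
  have hπx : π * x ≠ 0 := mul_ne_zero hπ.ne' hx
  -- sinh series divided by π x
  have h1 : HasSum (fun n : ℕ => (π * x) ^ (2 * n) / ((2 * n + 1).factorial : ℝ))
      (Real.sinh (π * x) / (π * x)) := by
    have := (Real.hasSum_sinh (π * x)).div_const (π * x)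
    refine this.congr_fun fun n => ?_
    rw [pow_succ]
    field_simp
  -- cosh(2Lx) series
  have h2 : HasSum (fun n : ℕ => (2 * L * x) ^ (2 * n) / ((2 * n).factorial : ℝ))
      (Real.cosh (2 * L * x)) := Real.hasSum_cosh (2 * L * x)
  -- the shifted x² part
  set G : ℕ → ℝ := fun m => match m with
    | 0 => 0
    | n + 1 => x ^ 2 / 2 * ((2 * L * x) ^ (2 * n) / ((2 * n).factorial : ℝ)) with hG
  have hGsum : HasSum G (x ^ 2 / 2 * Real.cosh (2 * L * x)) := by
    have h3 := h2.mul_left (x ^ 2 / 2)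
    refine (hasSum_nat_add_iff' (f := G) 1).mp ?_
    simpa [Finset.sum_range_succ, hG] using h3
  set F : ℕ → ℝ := fun m =>
    (π * x) ^ (2 * m) / ((2 * m + 1).factorial : ℝ)
      - (2 * L * x) ^ (2 * m) / (2 * ((2 * m).factorial : ℝ)) - G m with hF
  have hFsum : HasSum F (Real.sinh (π * x) / (π * x) - Real.cosh (2 * L * x) / 2
      - x ^ 2 / 2 * Real.cosh (2 * L * x)) := by
    have h2' : HasSum (fun n : ℕ => (2 * L * x) ^ (2 * n) / (2 * ((2 * n).factorial : ℝ)))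
        (Real.cosh (2 * L * x) / 2) := by
      have := h2.div_const 2
      refine this.congr_fun fun n => ?_
      ring
    exact (h1.sub h2').sub hGsum
  have key : HasSum (fun n => F (n + 2))
      ((Real.sinh (π * x) / (π * x) - Real.cosh (2 * L * x) / 2
        - x ^ 2 / 2 * Real.cosh (2 * L * x)) - (F 0 + F 1)) := by
    have := (hasSum_nat_add_iff' (f := F) 2).mpr hFsum
    simpa [Finset.sum_range_succ] using this
  -- compute F 0 + F 1
  have hF0 : F 0 = 1 / 2 := by
    simp [hF, hG]; norm_num
  have hF1 : F 1 = x ^ 2 / 2 := by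
    simp only [hF, hG]
    norm_num [Nat.factorial]
    nlinarith [hL2]
  -- value equality
  have hval : (Real.sinh (π * x) / (π * x) - Real.cosh (2 * L * x) / 2
        - x ^ 2 / 2 * Real.cosh (2 * L * x)) - (F 0 + F 1)
      = Real.sinh (π * x) / (π * x) - (1 + x ^ 2) * Real.cosh (L * x) ^ 2 := by
    rw [hF0, hF1]
    have h2m : Real.cosh (2 * L * x) = 2 * Real.cosh (L * x) ^ 2 - 1 := by
      rw [mul_assoc, Real.cosh_two_mul, Real.sinh_sq]; ring
    rw [h2m]; ring
  rw [← hval]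
  refine key.congr_fun fun n => ?_
  -- term equality
  have he1 : 2 * (n + 2) = 2 * (n + 1) + 2 := by ring
  have he2 : 2 * (n + 2) - 2 = 2 * (n + 1) := by omega
  have hfac : ((2 * (n + 2) + 1).factorial : ℝ)
      = (2 * (n:ℝ) + 5) * (2 * n + 4) * (2 * n + 3) * ((2 * (n + 1)).factorial : ℝ) := by
    have : 2 * (n + 2) + 1 = (2 * (n + 1) + 3) := by omega
    rw [this]
    have e : 2 * (n + 1) + 3 = (2 * (n + 1) + 2) + 1 := by omega
    rw [e, Nat.factorial_succ, Nat.factorial_succ, Nat.factorial_succ]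
    push_cast; ring
  have hfac2 : ((2 * (n + 2)).factorial : ℝ)
      = (2 * (n:ℝ) + 4) * (2 * n + 3) * ((2 * (n + 1)).factorial : ℝ) := by
    rw [he1, Nat.factorial_succ, Nat.factorial_succ]
    push_cast; ring
  simp only [hF, hG, he2]
  -- express even powers via squares
  have p1 : (π * x) ^ (2 * (n + 2)) = ((π * x) ^ 2) ^ (n + 1) * (π * x) ^ 2 := by
    rw [pow_mul, pow_succ]
  have p2 : (2 * L * x) ^ (2 * (n + 2))
      = ((π * x) ^ 2) ^ (n + 1) * ((2 * L / π) ^ 2) ^ (n + 1) * (2 * L * x) ^ 2 := by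
    rw [pow_mul, pow_succ, ← mul_pow]
    congr 2
    field_simp
  have p3 : (2 * L * x) ^ (2 * (n + 1))
      = ((π * x) ^ 2) ^ (n + 1) * ((2 * L / π) ^ 2) ^ (n + 1) := by
    rw [pow_mul, ← mul_pow]
    congr 1
    field_simp
  have p4 : (2 * L / π) ^ (2 * (n + 1)) = ((2 * L / π) ^ 2) ^ (n + 1) := by
    rw [pow_mul]
  rw [p1, p2, p3, p4, hfac, hfac2]
  have hLL : (2 * L / π) ^ 2 = (4 * (π ^ 2 / 6 - 1)) / π ^ 2 := by
    rw [div_pow, mul_pow, hL2]; norm_num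
  have hLx : (2 * L * x) ^ 2 = 4 * (π ^ 2 / 6 - 1) * x ^ 2 := by
    rw [mul_pow, mul_pow, hL2]; ring
  rw [hLL, hLx]
  have hfacne : ((2 * (n + 1)).factorial : ℝ) ≠ 0 := by
    exact_mod_cast (Nat.factorial_pos _).ne'
  have h235 : (2 * (n:ℝ) + 3) ≠ 0 := by positivity
  have h24 : (2 * (n:ℝ) + 4) ≠ 0 := by positivity
  have h25 : (2 * (n:ℝ) + 5) ≠ 0 := by positivity
  field_simp
  ring
end

section
/- For t ≥ 0, let f_t : ℝ → ℝ be defined by f_t(x) = exp(2x − (1+t)eˣ). Then for every real number w, the Fourier transform ∫_{−∞}^{∞} f_t(x) e^{−iwx} dx equals Γ(2 − iw)/(1+t)^{2−iw}, where Γ is the complex Gamma function and (1+t)^{2−iw} = exp((2−iw)·log(1+t)). -/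
open Real Complex MeasureTheory

theorem fourier_transform_f_t
    (t : ℝ) (ht : 0 ≤ t) (w : ℝ) :
    ∫ x : ℝ, (Real.exp (2 * x - (1 + t) * Real.exp x) : ℂ) *
        Complex.exp (-(Complex.I * w * x)) =
      Complex.Gamma (2 - Complex.I * w) /
        Complex.exp ((2 - Complex.I * w) * Real.log (1 + t)) := by
  have h1t : (0:ℝ) < 1 + t := by linarith
  set a : ℂ := 2 - Complex.I * w with ha
  have hre : 0 < a.re := by simp [ha]
  have key := integral_cpow_mul_exp_neg_mul_Ioi (a := a) (r := 1 + t) hre h1t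
  have himg : Real.exp '' Set.univ = Set.Ioi (0:ℝ) := by
    rw [Set.image_univ, Real.range_exp]
  have hcv := integral_image_eq_integral_abs_deriv_smul (s := Set.univ) (f := Real.exp)
    (f' := Real.exp) MeasurableSet.univ (fun x _ => (Real.hasDerivAt_exp x).hasDerivWithinAt)
    Real.exp_injective.injOn
    (fun u : ℝ => (u:ℂ) ^ (a - 1) * Complex.exp (-((1+t) * u)))
  rw [himg, Measure.restrict_univ] at hcv
  push_cast at key hcv
  rw [hcv] at key
  have hpt : ∀ x : ℝ,
      |Real.exp x| • (Complex.exp (x:ℂ) ^ (a - 1) *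
        Complex.exp (-((1 + (t:ℂ)) * Complex.exp (x:ℂ)))) =
      (Real.exp (2 * x - (1 + t) * Real.exp x) : ℂ) *
        Complex.exp (-(Complex.I * w * x)) := by
    intro x
    have hx : |Real.exp x| = Real.exp x := abs_of_pos (Real.exp_pos x)
    have hcast : ((Real.exp x : ℝ) : ℂ) = Complex.exp x := by
      rw [Complex.ofReal_exp]
    have hcpow : Complex.exp (x:ℂ) ^ (a - 1) = Complex.exp ((a - 1) * x) := by
      rw [Complex.cpow_def_of_ne_zero (Complex.exp_ne_zero _), Complex.log_exp]
      · ring_nf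
      · simp [Real.pi_pos]
      · simp [Real.pi_pos.le]
    rw [hx, hcpow, real_smul, Complex.ofReal_exp (2 * x - (1 + t) * Real.exp x), ← hcast,
      ← Complex.exp_add, ← Complex.exp_add, hcast, ← Complex.exp_add]
    congr 1
    push_cast
    ring
  rw [← funext hpt]
  rw [key]
  have hco : ((1 + t : ℝ) : ℂ) = 1 + (t:ℂ) := by push_cast; ring
  have hr0 : ((1 + t : ℝ) : ℂ) ≠ 0 := by exact_mod_cast h1t.ne'
  have hlog : Complex.exp (a * (Real.log (1 + t) : ℂ)) = (1 + (t:ℂ)) ^ a := by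
    rw [← hco, Complex.cpow_def_of_ne_zero hr0, Complex.ofReal_log h1t.le, mul_comm]
  rw [hlog, one_div, Complex.inv_cpow _ _ (by
    rw [← hco, Complex.arg_ofReal_of_nonneg h1t.le]; exact Real.pi_ne_zero.symm)]
  field_simp
end

section
/- For t ≥ 0, let f_t : ℝ → ℝ be defined by f_t(x) = exp(2x − (1+t)eˣ), and let f̂_t(w) = ∫_{−∞}^{∞} f_t(x)e^{−iwx} dx. Then for every nonzero real number w, |f̂_t(w)| = (1/(1+t)²)·√(πw(1+w²)/sinh(πw)), and moreover |f̂_t(w)| ≤ (1/(1+t)²)·(1/cosh(λ₀w)), where λ₀ = √(π²/6 − 1). (The inequality also holds at w = 0, where |f̂_t(0)| = 1/(1+t)².) -/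
/-!
The substitution `u = eˣ` turns `f̂_t(w)` into the Gamma integral
`∫₀^∞ u^(1 - iw) e^(-(1+t)u) du = (1+t)^(iw-2) Γ(2 - iw)`, so `|f̂_t(w)| = |Γ(2 - iw)| / (1+t)²`.
As `Γ(2 + iw)` is the conjugate of `Γ(2 - iw)` and `Γ(2 + iw) = (1 + iw)(iw) Γ(iw)`, Euler's
reflection formula gives `|Γ(2 - iw)|² = πw(1 + w²) / sinh(πw)`. The bound is then the inequality
`πw(1 + w²)(cosh(2λ₀w) + 1) ≤ 2 sinh(πw)` for `w ≥ 0`, which holds coefficientwise between the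
power series in `w`: the coefficients of `w` and `w³` agree (this is what fixes `λ₀`), and the
higher ones are compared by induction, using only `6 < π² ≤ 10`.
-/

open Real Complex MeasureTheory
open Set
open scoped Nat

noncomputable def coshAddOneCoeff (q : ℝ) (n : ℕ) : ℝ := q ^ n / (2 * n)! + if n = 0 then 1 else 0

lemma hasSum_coshAddOneCoeff_mul_pow (x y : ℝ) :
    HasSum (fun n => coshAddOneCoeff (y ^ 2) n * x ^ (2 * n)) (Real.cosh (y * x) + 1) := by
  convert (Real.hasSum_cosh (y * x)).add (hasSum_ite_eq 0 (1 : ℝ)) using 1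
  ext n
  rw [coshAddOneCoeff, add_mul, mul_pow, pow_mul, ← pow_mul, div_mul_eq_mul_div]
  split_ifs with hn <;> simp [hn]

lemma HasSum.one_add_sq_mul {a : ℕ → ℝ} {x S : ℝ} (h : HasSum (fun n => a n * x ^ (2 * n)) S) :
    HasSum (fun n => (a n + if n = 0 then 0 else a (n - 1)) * x ^ (2 * n)) ((1 + x ^ 2) * S) := by
  have hshift : HasSum (fun n => (if n = 0 then 0 else a (n - 1)) * x ^ (2 * n)) (x ^ 2 * S) := by
    refine (hasSum_nat_add_iff' 1).mp ?_
    simp only [Finset.sum_range_one, if_pos, zero_mul, sub_zero, add_eq_zero, one_ne_zero,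
      and_false, if_false, add_tsub_cancel_right]
    exact (h.mul_left (x ^ 2)).congr_fun fun n => by ring
  convert h.add hshift using 1
  · ext n; ring
  · ring

lemma pow_mul_add_le_two_mul_pow {P Q : ℝ} (hQ : 0 ≤ Q) (hQP : 7 * Q ≤ 2 * P)
    (h₀ : 5 * Q ^ 2 + 60 * Q ≤ 2 * P ^ 2) (k : ℕ) :
    (2 * k + 5) * Q ^ (k + 2) + (2 * k + 5) * (2 * k + 4) * (2 * k + 3) * Q ^ (k + 1) ≤
      2 * P ^ (k + 2) := by
  induction k with
  | zero => norm_num; linarith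
  | succ k ih =>
    have hA : 0 ≤ Q ^ (k + 1) * Q := by positivity
    have h1 : (2 * (k + 1) + 5 : ℝ) ≤ 7 / 2 * (2 * k + 5) := by linarith
    have h2 : (2 * (k + 1) + 5) * (2 * (k + 1) + 4) * (2 * (k + 1) + 3 : ℝ) ≤
        7 / 2 * ((2 * k + 5) * (2 * k + 4) * (2 * k + 3)) := by
      have : (2 * k + 7) * (2 * k + 6 : ℝ) ≤ 7 / 2 * ((2 * k + 4) * (2 * k + 3)) := by nlinarith
      nlinarith
    push_cast
    -- both terms grow by at most the factor `7 Q / 2 ≤ P` from `k` to `k + 1`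
    calc (2 * (k + 1) + 5) * Q ^ (k + 1 + 2)
          + (2 * (k + 1) + 5) * (2 * (k + 1) + 4) * (2 * (k + 1) + 3) * Q ^ (k + 1 + 1)
        ≤ 7 / 2 * Q * ((2 * k + 5) * Q ^ (k + 2)
          + (2 * k + 5) * (2 * k + 4) * (2 * k + 3) * Q ^ (k + 1)) := by
          simp only [pow_succ] at hA ⊢
          nlinarith [mul_le_mul_of_nonneg_right h1 (mul_nonneg hA hQ),
            mul_le_mul_of_nonneg_right h2 hA]
      _ ≤ P * (2 * P ^ (k + 2)) := mul_le_mul (by linarith) ih (by positivity) (by linarith)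
      _ = 2 * P ^ (k + 1 + 2) := by ring

lemma pow_div_factorial_add_le {P Q : ℝ} (hQ : 0 ≤ Q) (hQP : 7 * Q ≤ 2 * P)
    (h₀ : 5 * Q ^ 2 + 60 * Q ≤ 2 * P ^ 2) (k : ℕ) :
    Q ^ (k + 2) / (2 * (k + 2))! + Q ^ (k + 1) / (2 * (k + 1))! ≤
      2 * P ^ (k + 2) / (2 * (k + 2) + 1)! := by
  have hfact₄ : ((2 * (k + 2))! : ℝ) = (2 * k + 4) * (2 * k + 3) * (2 * (k + 1))! := by
    rw [show 2 * (k + 2) = 2 * (k + 1) + 1 + 1 by ring, Nat.factorial_succ, Nat.factorial_succ]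
    push_cast; ring
  have hfact₅ : ((2 * (k + 2) + 1)! : ℝ) = (2 * k + 5) * (2 * (k + 2))! := by
    rw [Nat.factorial_succ]; push_cast; ring
  rw [hfact₅, hfact₄, div_add_div _ _ (by positivity) (by positivity),
    div_le_div_iff₀ (by positivity) (by positivity)]
  calc _ = ((2 * k + 5) * Q ^ (k + 2) + (2 * k + 5) * (2 * k + 4) * (2 * k + 3) * Q ^ (k + 1))
        * ((2 * k + 4) * (2 * k + 3) * (2 * (k + 1))! * (2 * (k + 1))!) := by ring
    _ ≤ 2 * P ^ (k + 2) * ((2 * k + 4) * (2 * k + 3) * (2 * (k + 1))! * (2 * (k + 1))!) := by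
        gcongr
        exact pow_mul_add_le_two_mul_pow hQ hQP h₀ k
    _ = _ := by ring

lemma coshAddOneCoeff_add_le {P : ℝ} (h6 : 6 < P) (h10 : P ≤ 10) (n : ℕ) :
    coshAddOneCoeff (2 * P / 3 - 4) n
        + (if n = 0 then 0 else coshAddOneCoeff (2 * P / 3 - 4) (n - 1)) ≤
      2 * P ^ n / (2 * n + 1)! := by
  match n with
  | 0 => norm_num [coshAddOneCoeff]
  | 1 => norm_num [coshAddOneCoeff]; linarith
  | k + 2 =>
    have := pow_div_factorial_add_le (P := P) (Q := 2 * P / 3 - 4) (by linarith) (by linarith)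
      (by nlinarith) k
    simpa [coshAddOneCoeff] using this

lemma pi_mul_one_add_sq_mul_cosh_sq_le_sinh {w : ℝ} (hw : 0 ≤ w) :
    π * w * (1 + w ^ 2) * Real.cosh (√(π ^ 2 / 6 - 1) * w) ^ 2 ≤ Real.sinh (π * w) := by
  have hπ6 : 6 < π ^ 2 := by nlinarith [pi_gt_three]
  have hπ10 : π ^ 2 ≤ 10 := by nlinarith [pi_lt_d2, pi_gt_three]
  set y := 2 * √(π ^ 2 / 6 - 1)
  have hy : y ^ 2 = 2 * π ^ 2 / 3 - 4 := by
    rw [mul_pow, sq_sqrt (by linarith)]; ring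
  have hL := ((hasSum_coshAddOneCoeff_mul_pow w y).one_add_sq_mul).mul_left (π * w)
  have hR := (Real.hasSum_sinh (π * w)).mul_left 2
  have hcosh : Real.cosh (y * w) + 1 = 2 * Real.cosh (√(π ^ 2 / 6 - 1) * w) ^ 2 := by
    rw [mul_assoc, Real.cosh_two_mul, Real.cosh_sq]; ring
  suffices π * w * ((1 + w ^ 2) * (Real.cosh (y * w) + 1)) ≤ 2 * Real.sinh (π * w) by
    rw [hcosh] at this
    linarith
  refine hasSum_le (fun n => ?_) hL hR
  rw [hy]
  calc π * w * ((coshAddOneCoeff (2 * π ^ 2 / 3 - 4) n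
        + (if n = 0 then 0 else coshAddOneCoeff (2 * π ^ 2 / 3 - 4) (n - 1))) * w ^ (2 * n))
      ≤ π * w * (2 * (π ^ 2) ^ n / (2 * n + 1)! * w ^ (2 * n)) := by
        gcongr
        exact coshAddOneCoeff_add_le hπ6 hπ10 n
    _ = 2 * ((π * w) ^ (2 * n + 1) / (2 * n + 1)!) := by ring

theorem integral_exp_smul_comp_exp {E : Type*} [NormedAddCommGroup E] [NormedSpace ℝ E]
    (g : ℝ → E) : ∫ x, Real.exp x • g (Real.exp x) = ∫ y in Ioi 0, g y := by
  have := integral_image_eq_integral_abs_deriv_smul MeasurableSet.univ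
    (fun x _ => (Real.hasDerivAt_exp x).hasDerivWithinAt) Real.exp_injective.injOn g
  simpa [Real.range_exp, abs_of_pos (Real.exp_pos _)] using this.symm

theorem integral_cexp_mul_sub_mul_exp {s : ℂ} (hs : 0 < s.re) {r : ℝ} (hr : 0 < r) :
    ∫ x : ℝ, cexp (s * x - r * Real.exp x) = (1 / r) ^ s * Gamma s := by
  rw [← integral_cpow_mul_exp_neg_mul_Ioi hs hr, ← integral_exp_smul_comp_exp]
  congr 1 with x
  rw [real_smul, cpow_def_of_ne_zero (by exact_mod_cast (Real.exp_pos x).ne'),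
    ← ofReal_log (Real.exp_pos x).le, Real.log_exp, ofReal_exp, ← Complex.exp_add,
    ← Complex.exp_add]
  congr 1
  ring

theorem Complex.norm_Gamma_one_add_I_mul_sq {y : ℝ} (hy : y ≠ 0) :
    ‖Gamma (1 + I * y)‖ ^ 2 = π * y / Real.sinh (π * y) := by
  have hIy : I * y ≠ 0 := by simp [hy]
  have hconj : starRingEnd ℂ (Gamma (1 + I * y)) = Gamma (1 - I * y) := by
    rw [← Gamma_conj]; congr 1; simp [Complex.ext_iff]
  have hsin : Complex.sin (π * (I * y)) = Real.sinh (π * y) * I := by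
    rw [show (π : ℂ) * (I * y) = ((π * y : ℝ) : ℂ) * I by push_cast; ring, sin_mul_I,
      ofReal_sinh]
  -- `Γ(1 + iy) = iy Γ(iy)`, and Euler's reflection formula evaluates `Γ(iy) Γ(1 - iy)`
  have hprod : Gamma (1 + I * y) * Gamma (1 - I * y) = ((π * y / Real.sinh (π * y) : ℝ) : ℂ) := by
    rw [add_comm, Gamma_add_one _ hIy, mul_assoc, Gamma_mul_Gamma_one_sub, hsin]
    field_simp
    push_cast
    ring
  rw [← hconj, mul_conj] at hprod
  rw [Complex.sq_norm]
  exact_mod_cast hprod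

theorem Complex.norm_Gamma_two_sub_I_mul_sq {w : ℝ} (hw : w ≠ 0) :
    ‖Gamma (2 - I * w)‖ ^ 2 = π * w * (1 + w ^ 2) / Real.sinh (π * w) := by
  have h1 : 1 - I * w ≠ 0 := fun h => hw (by simpa using congrArg Complex.im h)
  have hΓ : Gamma (2 - I * w) = (1 - I * w) * Gamma (1 + I * (-w : ℝ)) := by
    rw [show (2 : ℂ) - I * w = 1 - I * w + 1 by ring, Gamma_add_one _ h1]
    congr 2
    push_cast
    ring
  have hnorm : ‖1 - I * w‖ ^ 2 = 1 + w ^ 2 := by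
    simp [Complex.sq_norm, normSq_apply]
    ring
  rw [hΓ, norm_mul, mul_pow, hnorm, norm_Gamma_one_add_I_mul_sq (neg_ne_zero.mpr hw), mul_neg,
    Real.sinh_neg, neg_div_neg_eq]
  ring

theorem Complex.norm_Gamma_two_sub_I_mul_le (w : ℝ) :
    ‖Gamma (2 - I * w)‖ ≤ 1 / Real.cosh (√(π ^ 2 / 6 - 1) * w) := by
  rcases eq_or_ne w 0 with rfl | hw
  · norm_num [show (2 : ℂ) = 1 + 1 by norm_num, Gamma_add_one]
  have habs : ‖Gamma (2 - I * w)‖ = ‖Gamma (2 - I * |w|)‖ := by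
    rcases abs_choice w with h | h
    · rw [h]
    · rw [h, ← norm_conj, ← Gamma_conj]; congr 2; simp [Complex.ext_iff]
  have hcosh : Real.cosh (√(π ^ 2 / 6 - 1) * w) = Real.cosh (√(π ^ 2 / 6 - 1) * |w|) := by
    rw [← Real.cosh_abs, abs_mul, abs_of_nonneg (sqrt_nonneg _)]
  have hw' : 0 < |w| := abs_pos.mpr hw
  rw [habs, hcosh, ← pow_le_pow_iff_left₀ (norm_nonneg _) (by positivity) two_ne_zero,
    norm_Gamma_two_sub_I_mul_sq hw'.ne', div_pow, one_pow,
    div_le_div_iff₀ (Real.sinh_pos_iff.mpr (by positivity)) (by positivity), one_mul]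
  exact pi_mul_one_add_sq_mul_cosh_sq_le_sinh hw'.le

theorem norm_integral_exp_two_mul_sub_mul_exp_mul_cexp {a : ℝ} (ha : 0 < a) (w : ℝ) :
    ‖∫ x : ℝ, (Real.exp (2 * x - a * Real.exp x) : ℂ) * cexp (-(I * w * x))‖ =
      1 / a ^ 2 * ‖Gamma (2 - I * w)‖ := by
  have hre : 0 < (2 - I * w).re := by simp
  calc _ = ‖∫ x : ℝ, cexp ((2 - I * w) * x - a * Real.exp x)‖ := by
        congr 2 with x
        rw [ofReal_exp, ← Complex.exp_add]
        congr 1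
        push_cast
        ring
    _ = _ := by
        rw [integral_cexp_mul_sub_mul_exp hre ha, norm_mul, ← ofReal_one, ← ofReal_div,
          norm_cpow_eq_rpow_re_of_pos (by positivity)]
        norm_num

theorem fourier_transform_f_t_abs
    (t : ℝ) (ht : 0 ≤ t) :
    (∀ w : ℝ, w ≠ 0 →
        ‖∫ x : ℝ, (Real.exp (2 * x - (1 + t) * Real.exp x) : ℂ) *
            Complex.exp (-(Complex.I * w * x))‖ =
          1 / (1 + t) ^ 2 * Real.sqrt (π * w * (1 + w ^ 2) / Real.sinh (π * w))) ∧
      (∀ w : ℝ,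
        ‖∫ x : ℝ, (Real.exp (2 * x - (1 + t) * Real.exp x) : ℂ) *
            Complex.exp (-(Complex.I * w * x))‖ ≤
          1 / (1 + t) ^ 2 * (1 / Real.cosh (Real.sqrt (π ^ 2 / 6 - 1) * w))) := by
  have hnorm := norm_integral_exp_two_mul_sub_mul_exp_mul_cexp (a := 1 + t) (by linarith)
  refine ⟨fun w hw => ?_, fun w => ?_⟩
  · rw [hnorm, ← norm_Gamma_two_sub_I_mul_sq hw, sqrt_sq (norm_nonneg _)]
  · rw [hnorm]
    gcongr
    exact norm_Gamma_two_sub_I_mul_le w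
end

section
/- Let λ > 0 be a real constant such that for every positive integer n and all vectors a = (a₁,…,aₙ), b = (b₁,…,bₙ) of positive real numbers, the inequality (T_{a,b})² ≤ 2·S^(2)_{a,b} + λ·√(S^(1)_{a,b}·S^(3)_{a,b}) holds. Then λ ≥ 2√2. -/
set_option maxHeartbeats 1000000

open Real Finset

lemma L0 (t : ℕ) : 2 * ∑ k ∈ range t, (k+1) = t*(t+1) := by
  induction t with
  | zero => simp
  | succ s ihs => rw [Finset.sum_range_succ, Nat.mul_add, ihs]; ring

lemma L1 (t : ℕ) : 6 * ∑ k ∈ range t, (k+1)*(t-k) = t*(t+1)*(t+2) := by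
  induction t with
  | zero => simp
  | succ t ih =>
    have h1 : ∑ k ∈ range (t+1), (k+1)*((t+1)-k)
        = (∑ k ∈ range t, ((k+1)*(t-k) + (k+1))) + (t+1) := by
      rw [Finset.sum_range_succ]
      have h3 : (t+1)-t = 1 := by omega
      rw [h3, Nat.mul_one]
      congr 1
      apply Finset.sum_congr rfl
      intro k hk
      have hk' : k ≤ t := Nat.le_of_lt (Finset.mem_range.mp hk)
      have h2 : (t+1)-k = (t-k)+1 := by omega
      rw [h2]; ring
    rw [h1, Finset.sum_add_distrib, Nat.mul_add, Nat.mul_add, ih]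
    have h4 : 6 * ∑ k ∈ range t, (k+1) = 3*(t*(t+1)) := by
      have := L0 t; omega
    rw [h4]; ring

lemma fiber_le (n u : ℕ) :
    6 * ∑ p ∈ (range n ×ˢ range n).filter (fun p => p.1 + p.2 = u), ((p.1+1)*(p.2+1)) ≤
      (u+2)^3 := by
  have step1 : ∑ p ∈ (range n ×ˢ range n).filter (fun p => p.1 + p.2 = u), ((p.1+1)*(p.2+1)) ≤
      ∑ k ∈ range (u+1), (k+1)*((u+1)-k) := by
    have hsub : (range n ×ˢ range n).filter (fun p => p.1 + p.2 = u) ⊆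
        (range (u+1)).image (fun k => (k, u-k)) := by
      intro p hp
      simp only [Finset.mem_filter, Finset.mem_product, Finset.mem_range] at hp
      simp only [Finset.mem_image, Finset.mem_range]
      exact ⟨p.1, by omega, by
        have : u - p.1 = p.2 := by omega
        rw [this]⟩
    have hinj : Set.InjOn (fun k => (k, u-k)) (range (u+1)) := by
      intro a _ b _ h
      simpa using congrArg Prod.fst h
    calc ∑ p ∈ (range n ×ˢ range n).filter (fun p => p.1 + p.2 = u), ((p.1+1)*(p.2+1))
        ≤ ∑ p ∈ (range (u+1)).image (fun k => (k, u-k)), ((p.1+1)*(p.2+1)) :=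
          Finset.sum_le_sum_of_subset hsub
      _ = ∑ k ∈ range (u+1), (k+1)*((u-k)+1) := Finset.sum_image (fun a ha b hb h => hinj ha hb h)
      _ = ∑ k ∈ range (u+1), (k+1)*((u+1)-k) := by
          apply Finset.sum_congr rfl
          intro k hk
          have : k ≤ u := Nat.le_of_lt_succ (Finset.mem_range.mp hk)
          congr 1
          omega
  have h1 := L1 (u+1)
  calc 6 * ∑ p ∈ (range n ×ˢ range n).filter (fun p => p.1 + p.2 = u), ((p.1+1)*(p.2+1))
      ≤ 6 * ∑ k ∈ range (u+1), (k+1)*((u+1)-k) := by omega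
    _ = (u+1)*(u+2)*(u+3) := h1
    _ ≤ (u+2)^3 := by nlinarith [sq_nonneg u]

lemma double_le (n : ℕ) (g : ℕ → ℝ) (hg : ∀ u, 0 ≤ g u) :
    ∑ i ∈ range n, ∑ j ∈ range n, ((i:ℝ)+1)*((j:ℝ)+1)*g (i+j)
      ≤ ∑ u ∈ range (2*n), (((u:ℝ)+2)^3/6) * g u := by
  have hmaps : ∀ p ∈ range n ×ˢ range n, p.1 + p.2 ∈ range (2*n) := by
    intro p hp
    simp only [Finset.mem_product, Finset.mem_range] at hp ⊢
    omega
  have hfib := Finset.sum_fiberwise_of_maps_to hmaps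
    (fun p : ℕ × ℕ => ((p.1:ℝ)+1)*((p.2:ℝ)+1)*g (p.1+p.2))
  rw [← Finset.sum_product']
  rw [← hfib]
  apply Finset.sum_le_sum
  intro u hu
  have hfe : ∑ p ∈ (range n ×ˢ range n).filter (fun p => p.1 + p.2 = u),
      ((p.1:ℝ)+1)*((p.2:ℝ)+1)*g (p.1+p.2)
      = (↑(∑ p ∈ (range n ×ˢ range n).filter (fun p => p.1 + p.2 = u), ((p.1+1)*(p.2+1))) : ℝ) * g u := by
    rw [Nat.cast_sum, Finset.sum_mul]
    apply Finset.sum_congr rfl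
    intro p hp
    have hpu : p.1 + p.2 = u := (Finset.mem_filter.mp hp).2
    rw [hpu]
    push_cast
    ring
  rw [hfe]
  apply mul_le_mul_of_nonneg_right _ (hg u)
  have h6 := fiber_le n u
  have : ((∑ p ∈ (range n ×ˢ range n).filter (fun p => p.1 + p.2 = u), ((p.1+1)*(p.2+1)) : ℕ) : ℝ)
      ≤ ((u+2)^3 : ℕ) / 6 := by
    rw [le_div_iff₀ (by norm_num : (0:ℝ) < 6)]
    have := (Nat.cast_le (α := ℝ)).mpr h6
    push_cast at this ⊢
    linarith
  calc _ ≤ (((u+2)^3 : ℕ) : ℝ)/6 := this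
    _ = ((u:ℝ)+2)^3/6 := by push_cast; ring

lemma Ib (x : ℝ) (M : ℕ) : (1-x)^2 * ∑ u ∈ range M, ((u:ℝ)+2)*x^(u+2)
    = x^2*(2-x) - x^(M+2)*(((M:ℝ)+2) - ((M:ℝ)+1)*x) := by
  induction M with
  | zero => simp
  | succ M ih =>
    rw [Finset.sum_range_succ, mul_add, ih]
    push_cast
    ring

lemma Ic (x : ℝ) (M : ℕ) : (1-x)^3 * ∑ u ∈ range M, ((u:ℝ)+2)^2*x^(u+2)
    = x^2*(4-3*x+x^2) - x^(M+2)*((((M:ℝ)+2) - ((M:ℝ)+1)*x)^2 + x) := by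
  induction M with
  | zero => simp; ring
  | succ M ih =>
    rw [Finset.sum_range_succ, mul_add, ih]
    push_cast
    ring

lemma Ba (x : ℝ) (hx0 : 0 ≤ x) (hx1 : x < 1) (M : ℕ) :
    ∑ u ∈ range M, x^(u+2) ≤ 1/(1-x) := by
  have hne : x ≠ 1 := ne_of_lt hx1
  have h1x : 0 < 1 - x := by linarith
  have hgs : ∑ u ∈ range M, x^u = (1 - x^M)/(1-x) := by
    rw [geom_sum_eq hne]
    rw [div_eq_div_iff (by linarith) (by linarith)]
    ring
  have hxM : 0 ≤ x^M := pow_nonneg hx0 M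
  have hle1 : x^M ≤ 1 := pow_le_one₀ hx0 hx1.le
  calc ∑ u ∈ range M, x^(u+2) = (x^2 * (1 - x^M))/(1-x) := by
        have e1 : ∑ u ∈ range M, x^(u+2) = x^2 * ∑ u ∈ range M, x^u := by
          rw [Finset.mul_sum]
          exact Finset.sum_congr rfl (fun u _ => by ring)
        rw [e1, hgs]; ring
    _ ≤ 1/(1-x) := by
        gcongr
        nlinarith [sq_nonneg x, pow_le_one₀ hx0 hx1.le (n := M)]

lemma Bb (x : ℝ) (hx0 : 0 ≤ x) (hx1 : x < 1) (M : ℕ) :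
    ∑ u ∈ range M, ((u:ℝ)+2)*x^(u+2) ≤ 1/(1-x)^2 := by
  have h1x : 0 < 1 - x := by linarith
  have key : (1-x)^2 * ∑ u ∈ range M, ((u:ℝ)+2)*x^(u+2) ≤ 1 := by
    rw [Ib]
    have h1 : 0 ≤ x^(M+2) := pow_nonneg hx0 _
    have h2 : (0:ℝ) ≤ ((M:ℝ)+2) - ((M:ℝ)+1)*x := by nlinarith [Nat.cast_nonneg (α := ℝ) M]
    have h3 : x^2*(2-x) ≤ 1 := by nlinarith [mul_nonneg h1x.le (mul_nonneg hx0 h1x.le)]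
    nlinarith [mul_nonneg h1 h2]
  exact (le_div_iff₀' (by positivity)).mpr key

lemma Bc (x : ℝ) (hx0 : 0 ≤ x) (hx1 : x < 1) (M : ℕ) :
    ∑ u ∈ range M, ((u:ℝ)+2)^2*x^(u+2) ≤ 2/(1-x)^3 := by
  have h1x : 0 < 1 - x := by linarith
  have key : (1-x)^3 * ∑ u ∈ range M, ((u:ℝ)+2)^2*x^(u+2) ≤ 2 := by
    rw [Ic]
    have h1 : 0 ≤ x^(M+2) := pow_nonneg hx0 _
    have h2 : (0:ℝ) ≤ (((M:ℝ)+2) - ((M:ℝ)+1)*x)^2 + x := by positivity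
    have h3 : x^2*(4-3*x+x^2) ≤ 2 := by
      nlinarith [sq_nonneg (1-x), sq_nonneg x, mul_nonneg hx0 (sq_nonneg (1-x))]
    nlinarith [mul_nonneg h1 h2]
  exact (le_div_iff₀' (by positivity)).mpr key

lemma main_est (lam : ℝ) (hlam : 0 < lam)
    (H : ∀ (n : ℕ), 0 < n → ∀ (a b : Fin n → ℝ),
      (∀ i, 0 < a i) → (∀ i, 0 < b i) →
      (∑ k, a k / b k) ^ 2 ≤
        2 * (∑ k, ∑ l, a k * a l / (b k + b l) ^ 2) +
        lam * Real.sqrt ((∑ k, ∑ l, a k * a l / (b k + b l) ^ 1) *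
          (∑ k, ∑ l, a k * a l / (b k + b l) ^ 3)))
    (ε : ℝ) (hε0 : 0 < ε) (hε1 : ε < 1) :
    2*Real.sqrt 2 - 12*Real.sqrt 2*ε ≤ lam := by
  have hr0 : (0:ℝ) < Real.sqrt 2 := Real.sqrt_pos.mpr (by norm_num)
  set r := Real.sqrt 2 with hrdef
  have hr2 : r^2 = 2 := Real.sq_sqrt (by norm_num)
  set x : ℝ := 1 - ε with hxdef
  have hx0 : 0 < x := by simp only [hxdef]; linarith
  have hx1 : x < 1 := by simp only [hxdef]; linarith
  obtain ⟨n, hxn⟩ := exists_pow_lt_of_lt_one hε0 hx1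
  have hn : 0 < n := by
    rcases Nat.eq_zero_or_pos n with h | h
    · exfalso; rw [h, pow_zero] at hxn; linarith
    · exact h
  have key := H n hn (fun i => (((i:ℕ):ℝ)+1) * x^((i:ℕ)+1)) (fun i => (((i:ℕ):ℝ)+1))
    (fun i => by positivity) (fun i => by positivity)
  -- T
  have hTeq : (∑ k : Fin n, ((((k:ℕ):ℝ)+1) * x^((k:ℕ)+1)) / (((k:ℕ):ℝ)+1))
      = ∑ i ∈ range n, x^(i+1) := by
    rw [Fin.sum_univ_eq_sum_range (fun m => ((((m:ℕ):ℝ)+1) * x^(m+1)) / (((m:ℕ):ℝ)+1)) n]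
    apply Finset.sum_congr rfl
    intro i _
    have : ((i:ℝ)+1) ≠ 0 := by positivity
    field_simp
  have hTlb : (1-ε)^2/ε ≤ ∑ i ∈ range n, x^(i+1) := by
    have hgs : ∑ i ∈ range n, x^i = (1 - x^n)/(1-x) := by
      rw [geom_sum_eq (ne_of_lt hx1)]
      rw [div_eq_div_iff (by linarith) (by linarith)]
      ring
    have e1 : ∑ i ∈ range n, x^(i+1) = x * ∑ i ∈ range n, x^i := by
      rw [Finset.mul_sum]
      exact Finset.sum_congr rfl (fun i _ => by ring)
    rw [e1, hgs]
    have h1x : (1:ℝ) - x = ε := by simp [hxdef]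
    rw [h1x, ← mul_div_assoc]
    rw [div_le_div_iff_of_pos_right hε0]
    nlinarith [mul_nonneg hx0.le (by linarith : (0:ℝ) ≤ ε - x^n)]
  -- generic double sum conversion
  have hconv : ∀ m : ℕ,
      (∑ k : Fin n, ∑ l : Fin n, (((((k:ℕ):ℝ)+1) * x^((k:ℕ)+1)) * ((((l:ℕ):ℝ)+1) * x^((l:ℕ)+1))) / (((((k:ℕ):ℝ)+1)) + ((((l:ℕ):ℝ)+1)))^m)
      = ∑ i ∈ range n, ∑ j ∈ range n, ((i:ℝ)+1)*((j:ℝ)+1)*(x^((i+j)+2)/(((i+j:ℕ):ℝ)+2)^m) := by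
    intro m
    rw [Fin.sum_univ_eq_sum_range (fun i => ∑ l : Fin n, (((((i:ℕ):ℝ)+1) * x^(i+1)) * ((((l:ℕ):ℝ)+1) * x^((l:ℕ)+1))) / ((((i:ℕ):ℝ)+1) + (((l:ℕ):ℝ)+1))^m) n]
    apply Finset.sum_congr rfl
    intro i _
    rw [Fin.sum_univ_eq_sum_range (fun j => ((((i:ℕ):ℝ)+1) * x^(i+1)) * ((((j:ℕ):ℝ)+1) * x^(j+1)) / ((((i:ℕ):ℝ)+1) + (((j:ℕ):ℝ)+1))^m) n]
    apply Finset.sum_congr rfl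
    intro j _
    have hxp : x^(i+1) * x^(j+1) = x^((i+j)+2) := by
      rw [← pow_add]
      congr 1
      omega
    push_cast
    have hbase : ((i:ℝ)+1+((j:ℝ)+1)) = ((i:ℝ)+(j:ℝ)+2) := by ring
    rw [hbase, ← hxp]
    ring
  have h1xε : (1:ℝ) - x = ε := by simp [hxdef]
  -- bounds on the three double sums
  have hS1 : (∑ i ∈ range n, ∑ j ∈ range n, ((i:ℝ)+1)*((j:ℝ)+1)*(x^((i+j)+2)/(((i+j:ℕ):ℝ)+2)^1))
      ≤ 1/(3*ε^3) := by
    calc _ ≤ ∑ u ∈ range (2*n), (((u:ℝ)+2)^3/6) * (x^(u+2)/((u:ℝ)+2)^1) :=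
          double_le n _ (fun u => by positivity)
      _ = (1/6) * ∑ u ∈ range (2*n), ((u:ℝ)+2)^2*x^(u+2) := by
          rw [Finset.mul_sum]
          apply Finset.sum_congr rfl
          intro u _
          have h2 : ((u:ℝ)+2) ≠ 0 := by positivity
          field_simp
      _ ≤ (1/6) * (2/(1-x)^3) := by
          apply mul_le_mul_of_nonneg_left (Bc x hx0.le hx1 (2*n)) (by norm_num)
      _ = 1/(3*ε^3) := by rw [h1xε]; ring
  have hS2 : (∑ i ∈ range n, ∑ j ∈ range n, ((i:ℝ)+1)*((j:ℝ)+1)*(x^((i+j)+2)/(((i+j:ℕ):ℝ)+2)^2))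
      ≤ 1/(6*ε^2) := by
    calc _ ≤ ∑ u ∈ range (2*n), (((u:ℝ)+2)^3/6) * (x^(u+2)/((u:ℝ)+2)^2) :=
          double_le n _ (fun u => by positivity)
      _ = (1/6) * ∑ u ∈ range (2*n), ((u:ℝ)+2)*x^(u+2) := by
          rw [Finset.mul_sum]
          apply Finset.sum_congr rfl
          intro u _
          have h2 : ((u:ℝ)+2) ≠ 0 := by positivity
          field_simp
      _ ≤ (1/6) * (1/(1-x)^2) := by
          apply mul_le_mul_of_nonneg_left (Bb x hx0.le hx1 (2*n)) (by norm_num)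
      _ = 1/(6*ε^2) := by rw [h1xε]; ring
  have hS3 : (∑ i ∈ range n, ∑ j ∈ range n, ((i:ℝ)+1)*((j:ℝ)+1)*(x^((i+j)+2)/(((i+j:ℕ):ℝ)+2)^3))
      ≤ 1/(6*ε) := by
    calc _ ≤ ∑ u ∈ range (2*n), (((u:ℝ)+2)^3/6) * (x^(u+2)/((u:ℝ)+2)^3) :=
          double_le n _ (fun u => by positivity)
      _ = (1/6) * ∑ u ∈ range (2*n), x^(u+2) := by
          rw [Finset.mul_sum]
          apply Finset.sum_congr rfl
          intro u _
          have h2 : ((u:ℝ)+2) ≠ 0 := by positivity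
          field_simp
      _ ≤ (1/6) * (1/(1-x)) := by
          apply mul_le_mul_of_nonneg_left (Ba x hx0.le hx1 (2*n)) (by norm_num)
      _ = 1/(6*ε) := by rw [h1xε]; ring
  have hS1nn : (0:ℝ) ≤ ∑ i ∈ range n, ∑ j ∈ range n, ((i:ℝ)+1)*((j:ℝ)+1)*(x^((i+j)+2)/(((i+j:ℕ):ℝ)+2)^1) :=
    Finset.sum_nonneg fun i _ => Finset.sum_nonneg fun j _ => by positivity
  have hS3nn : (0:ℝ) ≤ ∑ i ∈ range n, ∑ j ∈ range n, ((i:ℝ)+1)*((j:ℝ)+1)*(x^((i+j)+2)/(((i+j:ℕ):ℝ)+2)^3) :=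
    Finset.sum_nonneg fun i _ => Finset.sum_nonneg fun j _ => by positivity
  -- rewrite key
  beta_reduce at key
  rw [hTeq, hconv 1, hconv 2, hconv 3] at key
  -- sqrt bound
  have hprod : (∑ i ∈ range n, ∑ j ∈ range n, ((i:ℝ)+1)*((j:ℝ)+1)*(x^((i+j)+2)/(((i+j:ℕ):ℝ)+2)^1))
      * (∑ i ∈ range n, ∑ j ∈ range n, ((i:ℝ)+1)*((j:ℝ)+1)*(x^((i+j)+2)/(((i+j:ℕ):ℝ)+2)^3))
      ≤ (1/(3*ε^3))*(1/(6*ε)) :=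
    mul_le_mul hS1 hS3 hS3nn (by positivity)
  have heq : (1/(3*ε^3))*(1/(6*ε)) = (1/(3*r*ε^2))^2 := by
    have h18 : (3*r*ε^2)^2 = 18*ε^4 := by
      calc (3*r*ε^2)^2 = 9*r^2*ε^4 := by ring
        _ = 18*ε^4 := by rw [hr2]; ring
    rw [div_pow, one_pow, h18]
    field_simp
    ring
  have hsqrt : Real.sqrt ((∑ i ∈ range n, ∑ j ∈ range n, ((i:ℝ)+1)*((j:ℝ)+1)*(x^((i+j)+2)/(((i+j:ℕ):ℝ)+2)^1))
      * (∑ i ∈ range n, ∑ j ∈ range n, ((i:ℝ)+1)*((j:ℝ)+1)*(x^((i+j)+2)/(((i+j:ℕ):ℝ)+2)^3)))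
      ≤ 1/(3*r*ε^2) := by
    calc Real.sqrt _ ≤ Real.sqrt ((1/(3*ε^3))*(1/(6*ε))) := Real.sqrt_le_sqrt hprod
      _ = 1/(3*r*ε^2) := by rw [heq, Real.sqrt_sq (by positivity)]
  -- chain
  have hT2 : ((1-ε)^2/ε)^2 ≤ (∑ i ∈ range n, x^(i+1))^2 :=
    pow_le_pow_left₀ (by positivity) hTlb 2
  have hfin : ((1-ε)^2/ε)^2 ≤ 2*(1/(6*ε^2)) + lam*(1/(3*r*ε^2)) := by
    calc ((1-ε)^2/ε)^2 ≤ (∑ i ∈ range n, x^(i+1))^2 := hT2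
      _ ≤ _ := key
      _ ≤ 2*(1/(6*ε^2)) + lam*(1/(3*r*ε^2)) := by
          have t1 := mul_le_mul_of_nonneg_left hS2 (by norm_num : (0:ℝ) ≤ 2)
          have t2 := mul_le_mul_of_nonneg_left hsqrt hlam.le
          linarith
  have h2' : (1-ε)^4 ≤ 1/3 + lam/(3*r) := by
    have hmul := mul_le_mul_of_nonneg_right hfin (by positivity : (0:ℝ) ≤ ε^2)
    calc (1-ε)^4 = ((1-ε)^2/ε)^2*ε^2 := by field_simp
      _ ≤ (2*(1/(6*ε^2)) + lam*(1/(3*r*ε^2)))*ε^2 := hmul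
      _ = 1/3 + lam/(3*r) := by field_simp; ring
  have h3' : 3*r*(1-ε)^4 ≤ r + lam := by
    calc 3*r*(1-ε)^4 ≤ 3*r*(1/3 + lam/(3*r)) :=
          mul_le_mul_of_nonneg_left h2' (by linarith)
      _ = r + lam := by field_simp
  have h4' : 1-4*ε ≤ (1-ε)^4 := by
    have hq : (0:ℝ) ≤ 6-4*ε+ε^2 := by nlinarith [sq_nonneg ε]
    nlinarith [mul_nonneg (sq_nonneg ε) hq]
  nlinarith [mul_le_mul_of_nonneg_left h4' (by linarith : (0:ℝ) ≤ 3*r)]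

theorem best_constant_ge_two_sqrt_two
    (lam : ℝ) (hlam : 0 < lam)
    (H : ∀ (n : ℕ), 0 < n → ∀ (a b : Fin n → ℝ),
      (∀ i, 0 < a i) → (∀ i, 0 < b i) →
      (∑ k, a k / b k) ^ 2 ≤
        2 * (∑ k, ∑ l, a k * a l / (b k + b l) ^ 2) +
        lam * Real.sqrt ((∑ k, ∑ l, a k * a l / (b k + b l) ^ 1) *
          (∑ k, ∑ l, a k * a l / (b k + b l) ^ 3))) :
    2 * Real.sqrt 2 ≤ lam := by
  by_contra hcon
  push_neg at hcon
  have hr0 : (0:ℝ) < Real.sqrt 2 := Real.sqrt_pos.mpr (by norm_num)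
  set r := Real.sqrt 2 with hrdef
  set ε : ℝ := (2*r - lam)/(24*r) with hεdef
  have hε0 : 0 < ε := div_pos (by linarith) (by linarith)
  have hε1 : ε < 1 := by
    rw [hεdef, div_lt_one (by linarith)]
    linarith
  have main := main_est lam hlam H ε hε0 hε1
  have h12 : 12*r*ε = (2*r - lam)/2 := by
    rw [hεdef]
    field_simp
    ring
  rw [h12] at main
  linarith
end
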